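/- Let X and Y be compact Hausdorff smooth manifolds without boundary modeled on finite-dimensional Euclidean spaces, and let Ψ : C^∞(X, ℝ) → C^∞(Y, ℝ) be an ℝ-algebra isomorphism. For every finite list D₁, …, D_k of ℝ-linear derivations of C^∞(Y, ℝ) and every f ∈ C^∞(X, ℝ), the seminorm identity ‖D₁(D₂(⋯ D_k(Ψ(f))⋯))‖_∞ = ‖Ψ*(D₁)(Ψ*(D₂)(⋯ Ψ*(D_k)(f)⋯))‖_∞ holds, where Ψ*(D)(g) = Ψ⁻¹(D(Ψ(g))) denotes the pullback derivation. -/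

import Mathlib

open Manifold

/-!
The iterated pullback derivations are conjugates of the `Dᵢ` by `Ψ`, so the left-hand function
is `Ψ` applied to the right-hand one. The sup norm of a smooth function only depends on its
range, and the range is the spectrum in the algebra of smooth functions (a smooth function
without zeros has a smooth inverse), which an algebra isomorphism preserves.
-/

theorem ContinuousMap.norm_eq_of_range_eq {X Y E : Type*} [TopologicalSpace X] [CompactSpace X]
    [TopologicalSpace Y] [CompactSpace Y] [SeminormedAddCommGroup E]
    {f : C(X, E)} {g : C(Y, E)} (h : Set.range f = Set.range g) : ‖f‖ = ‖g‖ := by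
  rw [norm_eq_iSup_norm, norm_eq_iSup_norm, iSup, iSup, Set.range_comp' norm f,
    Set.range_comp' norm g, h]

namespace ContMDiffMap

variable {𝕜 : Type*} [NontriviallyNormedField 𝕜] {E : Type*} [NormedAddCommGroup E]
  [NormedSpace 𝕜 E] {H : Type*} [TopologicalSpace H] {I : ModelWithCorners 𝕜 E H}
  {M : Type*} [TopologicalSpace M] [ChartedSpace H M] {n : WithTop ℕ∞}

theorem isUnit_iff_forall_ne_zero (g : C^n⟮I, M; 𝕜⟯) : IsUnit g ↔ ∀ x, g x ≠ 0 := by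
  refine ⟨fun hg x => ((hg.map coeFnAlgHom).map (Pi.evalRingHom _ x)).ne_zero, fun hg => ?_⟩
  exact ⟨⟨g, ⟨fun x => (g x)⁻¹, g.contMDiff.inv₀ hg⟩, ext fun x => mul_inv_cancel₀ (hg x),
    ext fun x => inv_mul_cancel₀ (hg x)⟩, rfl⟩

theorem spectrum_eq_range (g : C^n⟮I, M; 𝕜⟯) : spectrum 𝕜 g = Set.range g := by
  ext c
  simp only [spectrum.mem_iff, isUnit_iff_forall_ne_zero, not_forall, not_not, Set.mem_range]
  refine exists_congr fun x => ?_
  change c - g x = 0 ↔ _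
  rw [sub_eq_zero, eq_comm]

end ContMDiffMap

theorem Equiv.foldr_apply_eq_apply_foldr_conj {α β γ : Type*} (e : α ≃ β) (act : γ → β → β)
    (l : List γ) (a : α) :
    l.foldr act (e a) = e (l.foldr (fun c a => e.symm (act c (e a))) a) := by
  induction l with
  | nil => rfl
  | cons c l ih => simp only [List.foldr_cons, ih, apply_symm_apply]

theorem algEquiv_smooth_functions_seminorm_identity_general
    {n m : ℕ}
    {X : Type*} [TopologicalSpace X] [ChartedSpace (EuclideanSpace ℝ (Fin n)) X]
    [CompactSpace X]
    {Y : Type*} [TopologicalSpace Y] [ChartedSpace (EuclideanSpace ℝ (Fin m)) Y]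
    [CompactSpace Y]
    (Ψ : C^(⊤ : ℕ∞)⟮𝓡 n, X; ℝ⟯ ≃ₐ[ℝ] C^(⊤ : ℕ∞)⟮𝓡 m, Y; ℝ⟯)
    (Ds : List (Derivation ℝ C^(⊤ : ℕ∞)⟮𝓡 m, Y; ℝ⟯ C^(⊤ : ℕ∞)⟮𝓡 m, Y; ℝ⟯))
    (f : C^(⊤ : ℕ∞)⟮𝓡 n, X; ℝ⟯) :
    (let u : C^(⊤ : ℕ∞)⟮𝓡 m, Y; ℝ⟯ := Ds.foldr (fun D g => D g) (Ψ f)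
     let v : C^(⊤ : ℕ∞)⟮𝓡 n, X; ℝ⟯ := Ds.foldr (fun D g => Ψ.symm (D (Ψ g))) f
     ‖(⟨⇑u, u.contMDiff.continuous⟩ : C(Y, ℝ))‖ =
       ‖(⟨⇑v, v.contMDiff.continuous⟩ : C(X, ℝ))‖) := by
  intro u v
  have hu : u = Ψ v := Ψ.toEquiv.foldr_apply_eq_apply_foldr_conj (fun D g => D g) Ds f
  apply ContinuousMap.norm_eq_of_range_eq
  change Set.range u = Set.range v
  rw [hu, ← ContMDiffMap.spectrum_eq_range, ← ContMDiffMap.spectrum_eq_range,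
    AlgEquiv.spectrum_eq]

/-- For compact Hausdorff smooth manifolds `X`, `Y` without boundary modeled on
finite-dimensional Euclidean spaces, an `ℝ`-algebra isomorphism
`Ψ : C^∞(X, ℝ) → C^∞(Y, ℝ)`, a finite list `D₁, …, D_k` of `ℝ`-linear derivations of
`C^∞(Y, ℝ)` and any `f ∈ C^∞(X, ℝ)`, the seminorm identity
`‖D₁(D₂(⋯ D_k(Ψ f)⋯))‖_∞ = ‖Ψ*(D₁)(Ψ*(D₂)(⋯ Ψ*(D_k) f⋯))‖_∞` holds, where
`Ψ*(D)(g) = Ψ⁻¹(D(Ψ g))` is the pullback derivation and `‖·‖_∞` is the supremum norm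
of the underlying continuous map. -/
theorem algEquiv_smooth_functions_seminorm_identity
    {n m : ℕ}
    {X : Type*} [TopologicalSpace X] [ChartedSpace (EuclideanSpace ℝ (Fin n)) X]
    [IsManifold (𝓡 n) (⊤ : ℕ∞) X] [T2Space X] [CompactSpace X]
    {Y : Type*} [TopologicalSpace Y] [ChartedSpace (EuclideanSpace ℝ (Fin m)) Y]
    [IsManifold (𝓡 m) (⊤ : ℕ∞) Y] [T2Space Y] [CompactSpace Y]
    (Ψ : C^(⊤ : ℕ∞)⟮𝓡 n, X; ℝ⟯ ≃ₐ[ℝ] C^(⊤ : ℕ∞)⟮𝓡 m, Y; ℝ⟯)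
    (Ds : List (Derivation ℝ C^(⊤ : ℕ∞)⟮𝓡 m, Y; ℝ⟯ C^(⊤ : ℕ∞)⟮𝓡 m, Y; ℝ⟯))
    (f : C^(⊤ : ℕ∞)⟮𝓡 n, X; ℝ⟯) :
    (let u : C^(⊤ : ℕ∞)⟮𝓡 m, Y; ℝ⟯ := Ds.foldr (fun D g => D g) (Ψ f)
     let v : C^(⊤ : ℕ∞)⟮𝓡 n, X; ℝ⟯ := Ds.foldr (fun D g => Ψ.symm (D (Ψ g))) f
     ‖(⟨⇑u, u.contMDiff.continuous⟩ : C(Y, ℝ))‖ =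
       ‖(⟨⇑v, v.contMDiff.continuous⟩ : C(X, ℝ))‖) :=
  algEquiv_smooth_functions_seminorm_identity_general Ψ Ds f
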